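/- arXiv:1003.5447 — 2 statements merged into one kernel-verified Lean document; each statement's English description precedes it below -/
import Mathlib

section
/- The ground α-equivalence relation ≈ on nominal terms is transitive: if t ≈ u and u ≈ v then t ≈ v. -/
/-- Ground nominal terms: t ::= a | f(t₁,...,tₙ) | ⟨a⟩t.
Names and function symbols are both modeled as natural numbers. -/
inductive NTerm : Type
  | name : ℕ → NTerm
  | fn   : ℕ → List NTerm → NTerm
  | abs  : ℕ → NTerm → NTerm

/-- Action of the swapping (a b) on a name. -/
def swapName (a b c : ℕ) : ℕ := if c = a then b else if c = b then a else c

/-- Swapping (a b)·t on ground nominal terms. -/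
def NTerm.swap (a b : ℕ) : NTerm → NTerm
  | .name c  => .name (swapName a b c)
  | .fn f ts => .fn f (ts.attach.map (fun x => NTerm.swap a b x.1))
  | .abs c t => .abs (swapName a b c) (NTerm.swap a b t)
decreasing_by
  all_goals simp_wf
  have := List.sizeOf_lt_of_mem x.2
  omega

/-- The freshness relation a # t on ground nominal terms. -/
inductive Fresh : ℕ → NTerm → Prop
  | name {a b : ℕ} : a ≠ b → Fresh a (.name b)
  | fn {a f} {ts : List NTerm} : (∀ t ∈ ts, Fresh a t) → Fresh a (.fn f ts)
  | absSame {a t} : Fresh a (.abs a t)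
  | absDiff {a b t} : a ≠ b → Fresh a t → Fresh a (.abs b t)

/-- Ground α-equivalence t ≈ u on nominal terms. -/
inductive Aeq : NTerm → NTerm → Prop
  | name (a : ℕ) : Aeq (.name a) (.name a)
  | fn {f} {ts us : List NTerm} : List.Forall₂ Aeq ts us → Aeq (.fn f ts) (.fn f us)
  | absSame {a t u} : Aeq t u → Aeq (.abs a t) (.abs a u)
  | absDiff {a b t u} : a ≠ b → Fresh a u → Aeq t (u.swap a b) →
      Aeq (.abs a t) (.abs b u)


/-! Induction on the first term. The only nontrivial case is a chain of two renamings of a binder,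
`⟨a⟩t ≈ ⟨b⟩u ≈ ⟨c⟩v` with `a`, `b`, `c` distinct. It rests on `≈` being equivariant under
swappings and preserving freshness, and on `(a b)·v ≈ v` whenever `a # v` and `b # v`. -/

namespace List.Forall₂

variable {α β γ : Type*} {R : α → β → Prop} {l₁ : List α} {l₂ : List β}

theorem imp_of_mem {S : α → β → Prop} (H : ∀ a ∈ l₁, ∀ b, R a b → S a b)
    (h : Forall₂ R l₁ l₂) : Forall₂ S l₁ l₂ :=
  ((forall₂_and_left l₁ l₂).2 ⟨H, h⟩).imp fun _ b ⟨hS, hR⟩ => hS b hR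

theorem forall_mem_right {p : β → Prop} (h : Forall₂ R l₁ l₂)
    (H : ∀ a ∈ l₁, ∀ b, R a b → p b) : ∀ b ∈ l₂, p b := by
  induction h with
  | nil => simp
  | cons hab _ ih =>
    simp only [mem_cons, forall_eq_or_imp] at H ⊢
    exact ⟨H.1 _ hab, ih H.2⟩

theorem trans_of_mem {S : β → γ → Prop} {T : α → γ → Prop} {l₃ : List γ}
    (H : ∀ a ∈ l₁, ∀ b c, R a b → S b c → T a c)
    (h₁ : Forall₂ R l₁ l₂) (h₂ : Forall₂ S l₂ l₃) : Forall₂ T l₁ l₃ := by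
  induction h₁ generalizing l₃ with
  | nil => cases h₂; exact .nil
  | cons hab _ ih =>
    simp only [mem_cons, forall_eq_or_imp] at H
    cases h₂ with
    | cons hbc h₂ => exact .cons (H.1 _ _ hab hbc) (ih H.2 h₂)

end List.Forall₂

theorem swapName_eq_swap (a b c : ℕ) : swapName a b c = Equiv.swap a b c :=
  (Equiv.swap_apply_def a b c).symm

theorem Equiv.swap_apply_swap_apply {α : Type*} [DecidableEq α] (a b c d x : α) :
    swap c d (swap a b x) = swap (swap c d a) (swap c d b) (swap c d x) := by
  rw [swap_apply_apply]
  simp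

namespace NTerm

@[induction_eliminator]
theorem rec_mem {P : NTerm → Prop} (name : ∀ a, P (.name a))
    (fn : ∀ f ts, (∀ t ∈ ts, P t) → P (.fn f ts)) (abs : ∀ a t, P t → P (.abs a t)) :
    ∀ t, P t
  | .name a => name a
  | .fn f ts => fn f ts fun t _ => rec_mem name fn abs t
  | .abs a t => abs a t (rec_mem name fn abs t)
decreasing_by
  all_goals simp_wf
  have := List.sizeOf_lt_of_mem ‹t ∈ ts›
  omega

variable (a b c d : ℕ)

@[simp] theorem swap_name : (name c).swap a b = .name (Equiv.swap a b c) := by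
  rw [NTerm.swap, swapName_eq_swap]

@[simp] theorem swap_fn (f : ℕ) (ts : List NTerm) :
    (fn f ts).swap a b = .fn f (ts.map (NTerm.swap a b)) := by
  rw [NTerm.swap, List.map_attach_eq_pmap, List.pmap_eq_map]

@[simp] theorem swap_abs (t : NTerm) :
    (abs c t).swap a b = .abs (Equiv.swap a b c) (t.swap a b) := by
  rw [NTerm.swap, swapName_eq_swap]

theorem swap_swap (t : NTerm) :
    (t.swap a b).swap c d = (t.swap c d).swap (Equiv.swap c d a) (Equiv.swap c d b) := by
  induction t with
  | name e => simp only [swap_name, Equiv.swap_apply_swap_apply a b c d e]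
  | fn f ts ih => simpa using List.map_congr_left ih
  | abs e t ih => simp only [swap_abs, ih, Equiv.swap_apply_swap_apply a b c d e]

theorem swap_comm (t : NTerm) : t.swap a b = t.swap b a := by
  induction t with
  | name e => simp [Equiv.swap_comm]
  | fn f ts ih => simpa using List.map_congr_left ih
  | abs e t ih => simp [ih, Equiv.swap_comm]

@[simp] theorem swap_swap_self (t : NTerm) : (t.swap a b).swap a b = t := by
  induction t with
  | name e => simp
  | fn f ts ih => simpa [Function.comp_def] using List.map_congr_left ih
  | abs e t ih => simp [ih]

@[simp] theorem swap_self (t : NTerm) : t.swap a a = t := by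
  induction t with
  | name e => simp
  | fn f ts ih => simpa using List.map_congr_left ih
  | abs e t ih => simp [ih]

end NTerm

open NTerm

theorem Fresh.swap {a : ℕ} {t : NTerm} (h : Fresh a t) (c d : ℕ) :
    Fresh (Equiv.swap c d a) (t.swap c d) := by
  induction h with
  | name hne => rw [swap_name]; exact .name ((Equiv.swap c d).injective.ne hne)
  | fn _ ih => rw [swap_fn]; exact .fn (List.forall_mem_map.2 ih)
  | absSame => rw [swap_abs]; exact .absSame
  | absDiff hne _ ih => rw [swap_abs]; exact .absDiff ((Equiv.swap c d).injective.ne hne) ih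

theorem Fresh.of_swap {a b c : ℕ} {t : NTerm} (h : Fresh a (t.swap b c)) (hb : a ≠ b)
    (hc : a ≠ c) : Fresh a t := by
  simpa [Equiv.swap_apply_of_ne_of_ne hb hc] using h.swap b c

theorem Aeq.refl (t : NTerm) : Aeq t t := by
  induction t with
  | name a => exact .name a
  | fn f ts ih => exact .fn (List.forall₂_same.2 ih)
  | abs a t ih => exact .absSame ih

theorem Aeq.fresh {t u : NTerm} {a : ℕ} (h : Aeq t u) (ha : Fresh a t) : Fresh a u := by
  induction t generalizing u with
  | name c => cases h; exact ha
  | fn f ts ih =>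
    cases h with | fn hts =>
    cases ha with | fn ha =>
    exact .fn (hts.forall_mem_right fun t ht _ htu => ih t ht htu (ha t ht))
  | abs b t ih =>
    cases h with
    | absSame h =>
      cases ha with
      | absSame => exact .absSame
      | absDiff hab ha => exact .absDiff hab (ih h ha)
    | @absDiff _ c _ u hbc hbu h =>
      by_cases hab : a = b
      · subst hab; exact .absDiff hbc hbu
      by_cases hac : a = c
      · subst hac; exact .absSame
      cases ha with
      | absSame => contradiction
      | absDiff _ ha => exact .absDiff hac ((ih h ha).of_swap hab hac)

theorem Aeq.swap {t u : NTerm} (h : Aeq t u) (c d : ℕ) : Aeq (t.swap c d) (u.swap c d) := by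
  induction t generalizing u with
  | name a => cases h; exact .refl _
  | fn f ts ih =>
    cases h with | fn hts =>
    simp only [swap_fn]
    exact .fn (List.forall₂_map_left_iff.2 (List.forall₂_map_right_iff.2
      (hts.imp_of_mem fun t ht _ htu => ih t ht htu)))
  | abs a t ih =>
    cases h with
    | absSame h => simpa using Aeq.absSame (ih h)
    | absDiff hab hau h =>
      simp only [swap_abs]
      refine .absDiff ((Equiv.swap c d).injective.ne hab) (hau.swap c d) ?_
      rw [← swap_swap]
      exact ih h

theorem aeq_swap_of_fresh {t : NTerm} {a b : ℕ} (ha : Fresh a t) (hb : Fresh b t) :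
    Aeq (t.swap a b) t := by
  induction t with
  | name c =>
    cases ha with | name hac =>
    cases hb with | name hbc =>
    simpa [Equiv.swap_apply_of_ne_of_ne hac.symm hbc.symm] using Aeq.refl (name c)
  | fn f ts ih =>
    cases ha with | fn ha =>
    cases hb with | fn hb =>
    rw [swap_fn]
    exact .fn (List.forall₂_map_left_iff.2
      (List.forall₂_same.2 fun t ht => ih t ht (ha t ht) (hb t ht)))
  | abs c t ih =>
    by_cases hab : a = b
    · subst hab; simpa using Aeq.refl _
    simp only [swap_abs]
    by_cases hac : a = c
    · subst hac
      cases hb with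
      | absSame => contradiction
      | absDiff hba hb =>
        rw [Equiv.swap_apply_left]
        exact .absDiff hba hb (by rw [swap_comm]; exact .refl _)
    by_cases hbc : b = c
    · subst hbc
      cases ha with
      | absSame => contradiction
      | absDiff _ ha =>
        rw [Equiv.swap_apply_right]
        exact .absDiff hab ha (.refl _)
    cases ha with
    | absSame => contradiction
    | absDiff _ ha =>
      cases hb with
      | absSame => contradiction
      | absDiff _ hb =>
        rw [Equiv.swap_apply_of_ne_of_ne (Ne.symm hac) (Ne.symm hbc)]
        exact .absSame (ih ha hb)

theorem Aeq.trans_of_abs {a : ℕ} {t u v : NTerm}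
    (ih : ∀ {u v : NTerm}, Aeq t u → Aeq u v → Aeq t v)
    (h₁ : Aeq (.abs a t) u) (h₂ : Aeq u v) : Aeq (.abs a t) v := by
  cases h₁ with
  | absSame h₁ =>
    cases h₂ with
    | absSame h₂ => exact .absSame (ih h₁ h₂)
    | absDiff hac hcv h₂ => exact .absDiff hac hcv (ih h₁ h₂)
  | @absDiff _ b _ u hab hau h₁ =>
    cases h₂ with
    | absSame h₂ => exact .absDiff hab (h₂.fresh hau) (ih h₁ (h₂.swap a b))
    | @absDiff _ c _ v hbc hbv h₂ =>
      have h₁₂ : Aeq t ((v.swap b c).swap a b) := ih h₁ (h₂.swap a b)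
      by_cases hac : a = c
      · subst hac
        rw [swap_comm b a, swap_swap_self] at h₁₂
        exact .absSame h₁₂
      have hav : Fresh a v := (h₂.fresh hau).of_swap hab hac
      -- `(a c)` is `(a b)(b c)(a b)`, and `(a b)` fixes `v` up to α-equivalence
      have hv : Aeq ((v.swap b c).swap a b) (v.swap a c) := by
        rw [swap_swap, Equiv.swap_apply_right,
          Equiv.swap_apply_of_ne_of_ne (Ne.symm hac) (Ne.symm hbc)]
        exact (aeq_swap_of_fresh hav hbv).swap a c
      exact .absDiff hac hav (ih h₁₂ hv)

/-- ground α-equivalence is transitive. -/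
theorem aeq_trans (t u v : NTerm) (h1 : Aeq t u) (h2 : Aeq u v) : Aeq t v := by
  induction t generalizing u v with
  | name a => cases h1; exact h2
  | fn f ts ih =>
    cases h1 with | fn h1 =>
    cases h2 with | fn h2 =>
    exact .fn (h1.trans_of_mem ih h2)
  | abs a t ih => exact Aeq.trans_of_abs (ih _ _) h1 h2
end

section
/- Equivariance of αProlog provability: if the sequent Δ ⟹ G is provable, then Δ ⟹ π·G is provable for any permutation π of names, where Δ is a set of closed program clauses (so π·Δ = Δ up to the implicit clause-level name binders). -/
/-! ### αProlog terms (name-restricted): t ::= a | X | (a b)·t | f(t⃗) | ⟨a⟩t.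
Names, variables and function symbols are all modeled as natural numbers. -/

inductive ATerm : Type
  | name : ℕ → ATerm                 -- a name a
  | var  : ℕ → ATerm                 -- a first-order variable X
  | swp  : ℕ → ℕ → ATerm → ATerm     -- a swapping (a b)·t
  | fn   : ℕ → List ATerm → ATerm    -- f(t₁,...,tₙ)
  | abs  : ℕ → ATerm → ATerm         -- a name-abstraction ⟨a⟩t

/-- Applying the swapping (a b) to a term, as an operation: it renames names
everywhere (including in name-abstractions and suspended swappings) and leaves
variables unchanged ((a b)·X = X). -/
def ATerm.swapf (a b : ℕ) : ATerm → ATerm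
  | .name c    => .name (swapName a b c)
  | .var X     => .var X
  | .swp c d t => .swp (swapName a b c) (swapName a b d) (ATerm.swapf a b t)
  | .fn f ts   => .fn f (ts.attach.map (fun x => ATerm.swapf a b x.1))
  | .abs c t   => .abs (swapName a b c) (ATerm.swapf a b t)
decreasing_by
  all_goals simp_wf
  have := List.sizeOf_lt_of_mem x.2
  omega

/-- Evaluating away the syntactic swappings in a term. -/
def ATerm.eval : ATerm → ATerm
  | .name c    => .name c
  | .var X     => .var X
  | .swp a b t => (ATerm.eval t).swapf a b
  | .fn f ts   => .fn f (ts.attach.map (fun x => ATerm.eval x.1))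
  | .abs c t   => .abs c (ATerm.eval t)
decreasing_by
  all_goals simp_wf
  have := List.sizeOf_lt_of_mem x.2
  omega

/-- Free variables of a term. -/
def ATerm.fv : ATerm → Finset ℕ
  | .name _    => ∅
  | .var X     => {X}
  | .swp _ _ t => ATerm.fv t
  | .fn _ ts   => ts.attach.foldr (fun x s => ATerm.fv x.1 ∪ s) ∅
  | .abs _ t   => ATerm.fv t
decreasing_by
  all_goals simp_wf
  have := List.sizeOf_lt_of_mem x.2
  omega

/-- Names occurring in a term (name-abstraction is not a real binder, so the
name a occurs free in ⟨a⟩a). -/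
def ATerm.names : ATerm → Finset ℕ
  | .name c    => {c}
  | .var _     => ∅
  | .swp a b t => {a} ∪ {b} ∪ ATerm.names t
  | .fn _ ts   => ts.attach.foldr (fun x s => ATerm.names x.1 ∪ s) ∅
  | .abs c t   => {c} ∪ ATerm.names t
decreasing_by
  all_goals simp_wf
  have := List.sizeOf_lt_of_mem x.2
  omega

/-- A term is ground if it has no free variables. -/
def ATerm.Ground (t : ATerm) : Prop := t.fv = ∅

/-- (Possibly name-capturing) substitution of terms for variables. -/
def ATerm.subst (θ : ℕ → ATerm) : ATerm → ATerm
  | .name c    => .name c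
  | .var X     => θ X
  | .swp a b t => .swp a b (ATerm.subst θ t)
  | .fn f ts   => .fn f (ts.attach.map (fun x => ATerm.subst θ x.1))
  | .abs c t   => .abs c (ATerm.subst θ t)
decreasing_by
  all_goals simp_wf
  have := List.sizeOf_lt_of_mem x.2
  omega

/-- The freshness relation a # t, on (evaluated, swapping-free) ground nominal
terms; a variable contains no names. -/
inductive FreshA : ℕ → ATerm → Prop
  | name {a b : ℕ} : a ≠ b → FreshA a (.name b)
  | var {a X} : FreshA a (.var X)
  | fn {a f} {ts : List ATerm} : (∀ t ∈ ts, FreshA a t) → FreshA a (.fn f ts)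
  | absSame {a t} : FreshA a (.abs a t)
  | absDiff {a b t} : a ≠ b → FreshA a t → FreshA a (.abs b t)

/-- α-equivalence t ≈ u on (evaluated, swapping-free) nominal terms. -/
inductive AeqA : ATerm → ATerm → Prop
  | name (a : ℕ) : AeqA (.name a) (.name a)
  | var (X : ℕ) : AeqA (.var X) (.var X)
  | fn {f} {ts us : List ATerm} : List.Forall₂ AeqA ts us → AeqA (.fn f ts) (.fn f us)
  | absSame {a t u} : AeqA t u → AeqA (.abs a t) (.abs a u)
  | absDiff {a b t u} : a ≠ b → FreshA a u → AeqA t (u.swapf a b) →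
      AeqA (.abs a t) (.abs b u)

/-- ⊨ a # t for ground terms t (evaluating suspended swappings first). -/
def ModelsFresh (a : ℕ) (t : ATerm) : Prop := FreshA a t.eval

/-- ⊨ t ≈ u for ground terms t, u. -/
def ModelsEq (t u : ATerm) : Prop := AeqA t.eval u.eval

/-! ### αProlog goals and program clauses -/

/-- Goals: G ::= ⊤ | p(t⃗) | a # t | t ≈ u | G ∧ G' | G ∨ G' | ∃X.G | Иa.G. -/
inductive AGoal : Type
  | tt    : AGoal
  | atom  : ℕ → List ATerm → AGoal
  | fr    : ℕ → ATerm → AGoal          -- a # t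
  | eq    : ATerm → ATerm → AGoal      -- t ≈ u
  | conj  : AGoal → AGoal → AGoal
  | disj  : AGoal → AGoal → AGoal
  | ex    : ℕ → AGoal → AGoal          -- ∃X.G
  | nw    : ℕ → AGoal → AGoal          -- Иa.G

/-- Applying the swapping (a b) to a goal. -/
def AGoal.swapf (a b : ℕ) : AGoal → AGoal
  | .tt         => .tt
  | .atom p ts  => .atom p (ts.map (ATerm.swapf a b))
  | .fr c t     => .fr (swapName a b c) (t.swapf a b)
  | .eq t u     => .eq (t.swapf a b) (u.swapf a b)
  | .conj G G'  => .conj (AGoal.swapf a b G) (AGoal.swapf a b G')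
  | .disj G G'  => .disj (AGoal.swapf a b G) (AGoal.swapf a b G')
  | .ex X G     => .ex X (AGoal.swapf a b G)
  | .nw c G     => .nw (swapName a b c) (AGoal.swapf a b G)

/-- Free variables of a goal. -/
def AGoal.fv : AGoal → Finset ℕ
  | .tt        => ∅
  | .atom _ ts => ts.foldr (fun t s => t.fv ∪ s) ∅
  | .fr _ t    => t.fv
  | .eq t u    => t.fv ∪ u.fv
  | .conj G G' => AGoal.fv G ∪ AGoal.fv G'
  | .disj G G' => AGoal.fv G ∪ AGoal.fv G'
  | .ex X G    => AGoal.fv G \ {X}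
  | .nw _ G    => AGoal.fv G

/-- Free names of a goal (Иa.G binds a). -/
def AGoal.names : AGoal → Finset ℕ
  | .tt        => ∅
  | .atom _ ts => ts.foldr (fun t s => t.names ∪ s) ∅
  | .fr a t    => {a} ∪ t.names
  | .eq t u    => t.names ∪ u.names
  | .conj G G' => AGoal.names G ∪ AGoal.names G'
  | .disj G G' => AGoal.names G ∪ AGoal.names G'
  | .ex _ G    => AGoal.names G
  | .nw a G    => AGoal.names G \ {a}

/-- Substitution on goals (capture-avoiding for variable binders ∃X). -/
def AGoal.subst (θ : ℕ → ATerm) : AGoal → AGoal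
  | .tt        => .tt
  | .atom p ts => .atom p (ts.map (ATerm.subst θ))
  | .fr a t    => .fr a (t.subst θ)
  | .eq t u    => .eq (t.subst θ) (u.subst θ)
  | .conj G G' => .conj (AGoal.subst θ G) (AGoal.subst θ G')
  | .disj G G' => .disj (AGoal.subst θ G) (AGoal.subst θ G')
  | .ex X G    => .ex X (AGoal.subst (Function.update θ X (ATerm.var X)) G)
  | .nw a G    => .nw a (AGoal.subst θ G)

/-- A goal is ground if it has no free variables. -/
def AGoal.Ground (G : AGoal) : Prop := G.fv = ∅

/-- A program clause Иa⃗.∀X⃗.[p(t⃗) ⊢ G]. -/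
structure AClause : Type where
  newNames : List ℕ       -- a⃗
  vars     : List ℕ       -- X⃗
  pred     : ℕ            -- p
  args     : List ATerm   -- t⃗
  body     : AGoal        -- G

/-- A clause is well-formed (closed) if all its free variables are among X⃗ and
all its free names are among a⃗. -/
def AClause.WF (C : AClause) : Prop :=
  (∀ t ∈ C.args, ↑t.fv ⊆ (C.vars : List ℕ).toFinset ∧
      ↑t.names ⊆ (C.newNames : List ℕ).toFinset) ∧
  C.body.fv ⊆ C.vars.toFinset ∧ C.body.names ⊆ C.newNames.toFinset

/-- A permutation of names, given as a composition of (zero or more) swappings. -/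
abbrev NPerm : Type := List (ℕ × ℕ)

/-- Applying a permutation to a term. -/
def NPerm.appT (π : NPerm) (t : ATerm) : ATerm :=
  π.foldr (fun p t => t.swapf p.1 p.2) t

/-- Applying a permutation to a goal. -/
def NPerm.appG (π : NPerm) (G : AGoal) : AGoal :=
  π.foldr (fun p G => G.swapf p.1 p.2) G

/-- A substitution is ground on a given list of variables and the identity
elsewhere. -/
def GroundOn (θ : ℕ → ATerm) (Xs : List ℕ) : Prop :=
  (∀ X ∈ Xs, (θ X).Ground) ∧ ∀ X, X ∉ Xs → θ X = ATerm.var X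

/-- αProlog provability Δ ⟹ G (Figure 2 of the paper). -/
inductive AProv (Δ : Set AClause) : AGoal → Prop
  | tt : AProv Δ .tt
  | fr {a t} : ModelsFresh a t → AProv Δ (.fr a t)
  | eq {t u} : ModelsEq t u → AProv Δ (.eq t u)
  | conj {G G'} : AProv Δ G → AProv Δ G' → AProv Δ (.conj G G')
  | disjL {G G'} : AProv Δ G → AProv Δ (.disj G G')
  | disjR {G G'} : AProv Δ G' → AProv Δ (.disj G G')
  | ex {X G} (t : ATerm) : t.Ground →
      AProv Δ (G.subst (Function.update ATerm.var X t)) → AProv Δ (.ex X G)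
  | nw {a G} : AProv Δ G → AProv Δ (.nw a G)
  | backchain {ts : List ATerm} (C : AClause) (π : NPerm) (θ : ℕ → ATerm) :
      C ∈ Δ → GroundOn θ C.vars →
      List.Forall₂ (fun t u => ModelsEq t u) ts
        (C.args.map (fun u => π.appT (u.subst θ))) →
      AProv Δ (π.appG (C.body.subst θ)) →
      AProv Δ (.atom C.pred ts)


/-! ### Auxiliary lemmas for equivariance -/

theorem ATerm.myind {motive : ATerm → Prop}
    (name : ∀ a, motive (.name a)) (var : ∀ X, motive (.var X))
    (swp : ∀ a b t, motive t → motive (.swp a b t))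
    (fn : ∀ f ts, (∀ t ∈ ts, motive t) → motive (.fn f ts))
    (abs : ∀ a t, motive t → motive (.abs a t)) : ∀ t, motive t
  | .name a => name a
  | .var X => var X
  | .swp a b t => swp a b t (ATerm.myind name var swp fn abs t)
  | .fn f ts => fn f ts (fun t ht => ATerm.myind name var swp fn abs t)
  | .abs a t => abs a t (ATerm.myind name var swp fn abs t)
decreasing_by
  all_goals simp_wf
  all_goals first
    | omega
    | (have := List.sizeOf_lt_of_mem ht; omega)

theorem swapName_swapName (a b c d e : ℕ) :
    swapName a b (swapName c d e) =
      swapName (swapName a b c) (swapName a b d) (swapName a b e) := by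
  simp only [swapName]; split_ifs <;> omega

theorem swapName_inj {a b c d : ℕ} (h : c ≠ d) :
    swapName a b c ≠ swapName a b d := by
  simp only [swapName]; split_ifs <;> omega

theorem foldr_attach' {α β : Type*} (l : List α) (f : α → β → β) (b : β) :
    l.attach.foldr (fun x s => f x.1 s) b = l.foldr f b := by
  induction l with
  | nil => rfl
  | cons x l ih => simp only [List.attach_cons, List.foldr_cons, List.foldr_map]; rw [ih]

theorem ATerm.swapf_fn (a b f) (ts : List ATerm) :
    (ATerm.fn f ts).swapf a b = .fn f (ts.map (ATerm.swapf a b)) := by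
  rw [ATerm.swapf]; simp

theorem ATerm.eval_fn (f) (ts : List ATerm) :
    (ATerm.fn f ts).eval = .fn f (ts.map ATerm.eval) := by
  rw [ATerm.eval]; simp

theorem ATerm.fv_fn (f) (ts : List ATerm) :
    (ATerm.fn f ts).fv = ts.foldr (fun t s => t.fv ∪ s) ∅ := by
  rw [ATerm.fv]; exact foldr_attach' ts (fun t s => t.fv ∪ s) ∅

theorem ATerm.subst_fn (θ f) (ts : List ATerm) :
    (ATerm.fn f ts).subst θ = .fn f (ts.map (ATerm.subst θ)) := by
  rw [ATerm.subst]; simp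

theorem ATerm.swapf_swapf (a b c d : ℕ) (t : ATerm) :
    (t.swapf c d).swapf a b
      = (t.swapf a b).swapf (swapName a b c) (swapName a b d) := by
  induction t using ATerm.myind with
  | name e => simp only [ATerm.swapf]; rw [swapName_swapName]
  | var X => simp only [ATerm.swapf]
  | swp e e' t ih =>
      simp only [ATerm.swapf, ih]
      rw [swapName_swapName a b c d e, swapName_swapName a b c d e']
  | fn f ts ih =>
      simp only [ATerm.swapf_fn, List.map_map]
      congr 1
      exact List.map_congr_left fun t ht => ih t ht
  | abs e t ih =>
      simp only [ATerm.swapf, ih]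
      rw [swapName_swapName]

theorem ATerm.eval_swapf (a b : ℕ) (t : ATerm) :
    (t.swapf a b).eval = t.eval.swapf a b := by
  induction t using ATerm.myind with
  | name c => simp [ATerm.swapf, ATerm.eval]
  | var X => simp [ATerm.swapf, ATerm.eval]
  | swp c d t ih =>
      simp only [ATerm.swapf, ATerm.eval, ih]
      exact (ATerm.swapf_swapf a b c d t.eval).symm
  | fn f ts ih =>
      simp only [ATerm.swapf_fn, ATerm.eval_fn, List.map_map]
      congr 1
      exact List.map_congr_left fun t ht => ih t ht
  | abs c t ih => simp [ATerm.swapf, ATerm.eval, ih]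

theorem ATerm.fv_swapf (a b : ℕ) (t : ATerm) : (t.swapf a b).fv = t.fv := by
  induction t using ATerm.myind with
  | name c => simp [ATerm.swapf, ATerm.fv]
  | var X => simp [ATerm.swapf, ATerm.fv]
  | swp c d t ih => simp [ATerm.swapf, ATerm.fv, ih]
  | fn f ts ih =>
      rw [ATerm.swapf_fn, ATerm.fv_fn, ATerm.fv_fn]
      induction ts with
      | nil => simp
      | cons t ts ih2 =>
          simp only [List.map_cons, List.foldr_cons]
          rw [ih t (by simp), ih2 (fun t ht => ih t (by simp [ht]))]
  | abs c t ih => simp [ATerm.swapf, ATerm.fv, ih]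

theorem ATerm.ground_swapf {t : ATerm} (h : t.Ground) (a b : ℕ) :
    (t.swapf a b).Ground := by
  unfold ATerm.Ground at *; rw [ATerm.fv_swapf]; exact h

theorem FreshA.swapf {c : ℕ} {t : ATerm} (h : FreshA c t) (a b : ℕ) :
    FreshA (swapName a b c) (t.swapf a b) := by
  induction h with
  | name hne =>
      simp only [ATerm.swapf]
      exact FreshA.name (swapName_inj hne)
  | var => simp only [ATerm.swapf]; exact FreshA.var
  | fn _ ih =>
      rw [ATerm.swapf_fn]
      exact FreshA.fn (by simpa using fun t ht => ih t ht)
  | absSame => simp only [ATerm.swapf]; exact FreshA.absSame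
  | absDiff hne _ ih =>
      simp only [ATerm.swapf]
      exact FreshA.absDiff (swapName_inj hne) ih

theorem AeqA.swapf {t u : ATerm} (h : AeqA t u) (a b : ℕ) :
    AeqA (t.swapf a b) (u.swapf a b) := by
  induction t using ATerm.myind generalizing u with
  | name c => cases h; simp only [ATerm.swapf]; exact AeqA.name _
  | var X => cases h; simp only [ATerm.swapf]; exact AeqA.var _
  | swp c d t ih => cases h
  | fn f ts ih =>
      cases h with
      | fn hts =>
          rw [ATerm.swapf_fn, ATerm.swapf_fn]
          refine AeqA.fn ?_
          clear * - hts ih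
          induction hts with
          | nil => simp
          | cons h hl ih2 =>
              simp only [List.map_cons]
              exact List.Forall₂.cons (ih _ (by simp) h)
                (ih2 (fun t ht => ih t (by simp [ht])))
  | abs c t ih =>
      cases h with
      | absSame h => simp only [ATerm.swapf]; exact AeqA.absSame (ih h)
      | @absDiff _ d _ u hne hfr h =>
          simp only [ATerm.swapf]
          refine AeqA.absDiff (swapName_inj hne) (hfr.swapf a b) ?_
          have := ih h
          rwa [ATerm.swapf_swapf] at this

theorem ModelsEq.swapf {t u : ATerm} (h : ModelsEq t u) (a b : ℕ) :
    ModelsEq (t.swapf a b) (u.swapf a b) := by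
  unfold ModelsEq at *
  rw [ATerm.eval_swapf, ATerm.eval_swapf]
  exact h.swapf a b

theorem ModelsFresh.swapf {c : ℕ} {t : ATerm} (h : ModelsFresh c t) (a b : ℕ) :
    ModelsFresh (swapName a b c) (t.swapf a b) := by
  unfold ModelsFresh at *
  rw [ATerm.eval_swapf]
  exact h.swapf a b

theorem ATerm.subst_swapf (a b : ℕ) (θ : ℕ → ATerm) (t : ATerm) :
    (t.subst θ).swapf a b = (t.swapf a b).subst (fun X => (θ X).swapf a b) := by
  induction t using ATerm.myind with
  | name c => simp [ATerm.swapf, ATerm.subst]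
  | var X => simp [ATerm.swapf, ATerm.subst]
  | swp c d t ih => simp [ATerm.swapf, ATerm.subst, ih]
  | fn f ts ih =>
      simp only [ATerm.swapf_fn, ATerm.subst_fn, List.map_map]
      congr 1
      exact List.map_congr_left fun t ht => ih t ht
  | abs c t ih => simp [ATerm.swapf, ATerm.subst, ih]

theorem update_swapf (a b X : ℕ) (θ : ℕ → ATerm) (t : ATerm) :
    (fun Y => ((Function.update θ X t) Y).swapf a b)
      = Function.update (fun Y => (θ Y).swapf a b) X (t.swapf a b) := by
  funext Y
  rcases eq_or_ne Y X with rfl | hY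
  · simp
  · simp [Function.update_of_ne hY]

theorem AGoal.subst_swapf (a b : ℕ) (θ : ℕ → ATerm) (G : AGoal) :
    (G.subst θ).swapf a b = (G.swapf a b).subst (fun X => (θ X).swapf a b) := by
  induction G generalizing θ with
  | tt => simp [AGoal.swapf, AGoal.subst]
  | atom p ts =>
      simp [AGoal.swapf, AGoal.subst, List.map_map, Function.comp,
        ATerm.subst_swapf]
  | fr c t => simp [AGoal.swapf, AGoal.subst, ATerm.subst_swapf]
  | eq t u => simp [AGoal.swapf, AGoal.subst, ATerm.subst_swapf]
  | conj G G' ih ih' => simp [AGoal.swapf, AGoal.subst, ih, ih']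
  | disj G G' ih ih' => simp [AGoal.swapf, AGoal.subst, ih, ih']
  | ex X G ih =>
      simp only [AGoal.swapf, AGoal.subst, ih]
      rw [update_swapf]
      simp [ATerm.swapf]
  | nw c G ih => simp [AGoal.swapf, AGoal.subst, ih]

theorem aprov_swapf {Δ : Set AClause} {G : AGoal} (h : AProv Δ G) (a b : ℕ) :
    AProv Δ (G.swapf a b) := by
  induction h with
  | tt => exact AProv.tt
  | fr h => exact AProv.fr (h.swapf a b)
  | eq h => exact AProv.eq (h.swapf a b)
  | conj _ _ ih ih' => exact AProv.conj ih ih'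
  | disjL _ ih => exact AProv.disjL ih
  | disjR _ ih => exact AProv.disjR ih
  | @ex X G t hg _ ih =>
      refine AProv.ex (t.swapf a b) (t.ground_swapf hg a b) ?_
      have e : (G.subst (Function.update ATerm.var X t)).swapf a b
          = (G.swapf a b).subst (Function.update ATerm.var X (t.swapf a b)) := by
        rw [AGoal.subst_swapf, update_swapf]
        congr 1
        funext Y
        rcases eq_or_ne Y X with rfl | hY
        · simp
        · simp [Function.update_of_ne hY, ATerm.swapf]
      rw [← e]
      exact ih
  | nw _ ih => exact AProv.nw ih
  | @backchain ts C π θ hC hθ heq _ ih =>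
      show AProv Δ (.atom C.pred (ts.map (ATerm.swapf a b)))
      refine AProv.backchain C ((a, b) :: π) θ hC hθ ?_ ih
      have e : C.args.map (fun u => NPerm.appT ((a, b) :: π) (u.subst θ))
          = (C.args.map (fun u => π.appT (u.subst θ))).map (ATerm.swapf a b) := by
        simp [NPerm.appT]
      rw [e, List.forall₂_map_right_iff, List.forall₂_map_left_iff]
      exact heq.imp fun t u h => h.swapf a b

/-- equivariance of αProlog provability: if Δ ⟹ G is provable
then Δ ⟹ π·G is provable, for any permutation π of names, where Δ is a set of
closed program clauses. -/
theorem aprov_equivariant (Δ : Set AClause) (hΔ : ∀ C ∈ Δ, C.WF)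
    (G : AGoal) (h : AProv Δ G) (π : NPerm) :
    AProv Δ (π.appG G) := by
  induction π with
  | nil => exact h
  | cons p π ih => exact aprov_swapf ih p.1 p.2
end
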